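/- Let P be an integral monoid. A P-module M is flat if and only if M is flat as a P*-module and the quotient module M̄ = M ⊗_P P̄ is a flat P̄-module, where P* is the group of units and P̄ = P/P* is the sharpening. -/

import Mathlib

/-!
Over an integral monoid a module is flat iff it is torsion-free and comparable. Flatness gives
both properties because they hold in free modules and every relation in a filtered colimit is
already visible at some stage. Conversely, if `M` is torsion-free and comparable, "having a
common generator" is an equivalence relation on `M`, and `M` is the filtered colimit of the
free modules on finite sets of generators in pairwise different classes.

Both properties transfer between `M` and the pair (`M` over `P*`, `M̄` over `P̄`): every module
over a group is comparable, and a relation `p • m = q • m'` in `M` is determined by its image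
in `M̄` up to a unit, which torsion-freeness over `P*` pins down.
-/

section MonMod

variable (P : Type) [CommMonoid P] (M : Type) [MulAction P M]

/-- `S ⊆ M` is a basis of the `P`-module `M`: the action map `P × S → M` is bijective. -/
def IsBasisSet (S : Set M) : Prop :=
  Function.Bijective fun x : P × S => x.1 • (x.2 : M)

/-- `M` is a free `P`-module: it admits a basis. -/
def IsFreeMod : Prop := ∃ S : Set M, IsBasisSet P M S

/-- `M` is a torsion-free `P`-module. -/
def IsTorsionFreeMod : Prop := ∀ (p p' : P) (m : M), p • m = p' • m → p = p'

/-- `M` is a comparable `P`-module. -/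
def IsComparableMod : Prop :=
  ∀ (p₁ p₂ : P) (m₁ m₂ : M), p₁ • m₁ = p₂ • m₂ →
    ∃ (m : M) (ρ₁ ρ₂ : P), ρ₁ • m = m₁ ∧ ρ₂ • m = m₂

/-- `M` is a flat `P`-module: it is a filtered direct limit of free `P`-modules.
This is spelled out explicitly: there is a nonempty directed (filtered) index
preorder `(ι, r)`, a functorial system `F` of `P`-modules with free members and
equivariant transition maps `t`, together with equivariant maps `g i : F i → M`
exhibiting `M` as the direct limit of the system. -/
def IsFlatMod : Prop :=
  ∃ (ι : Type) (r : ι → ι → Prop) (F : ι → Type) (act : ∀ i, P → F i → F i)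
    (t : ∀ i j, r i j → F i → F j) (g : ∀ i, F i → M),
    Nonempty ι ∧
    (∀ i, r i i) ∧
    (∀ i j k, r i j → r j k → r i k) ∧
    (∀ i j, ∃ k, r i k ∧ r j k) ∧
    -- each `F i` is a `P`-module:
    (∀ i (x : F i), act i 1 x = x) ∧
    (∀ i (p q : P) (x : F i), act i (p * q) x = act i p (act i q x)) ∧
    -- each `F i` is free:
    (∀ i, ∃ S : Set (F i), Function.Bijective fun x : P × S => act i x.1 (x.2 : F i)) ∧
    -- transition maps are equivariant and functorial:
    (∀ i j (hij : r i j) (p : P) (x : F i), t i j hij (act i p x) = act j p (t i j hij x)) ∧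
    (∀ i (hii : r i i) (x : F i), t i i hii x = x) ∧
    (∀ i j k (hij : r i j) (hjk : r j k) (hik : r i k) (x : F i),
       t j k hjk (t i j hij x) = t i k hik x) ∧
    -- the maps to `M` are equivariant and compatible:
    (∀ i (p : P) (x : F i), g i (act i p x) = p • g i x) ∧
    (∀ i j (hij : r i j) (x : F i), g j (t i j hij x) = g i x) ∧
    -- `M` is the direct limit of the system:
    (∀ m : M, ∃ i, ∃ x : F i, g i x = m) ∧
    (∀ i j (x : F i) (y : F j), g i x = g j y →
       ∃ k, ∃ (hik : r i k) (hjk : r j k), t i k hik x = t j k hjk y)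

end MonMod

/-- The congruence relation on a commutative monoid identifying elements that differ by a unit.
The quotient is the sharpening `P̄ = P/P*`. -/
def unitsCon (P : Type) [CommMonoid P] : Con P where
  r a b := ∃ u : Pˣ, a * (u : P) = b
  iseqv :=
    { refl := fun a => ⟨1, by simp⟩
      symm := by
        rintro a b ⟨u, rfl⟩
        exact ⟨u⁻¹, by rw [mul_assoc, Units.mul_inv, mul_one]⟩
      trans := by
        rintro a b c ⟨u, rfl⟩ ⟨v, rfl⟩
        exact ⟨u * v, by rw [Units.val_mul, mul_assoc]⟩ }
  mul' := by
    rintro w x y z ⟨u, rfl⟩ ⟨v, rfl⟩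
    exact ⟨u * v, by rw [Units.val_mul, mul_mul_mul_comm]⟩

/-- The sharpening `P̄ = P/P*` of a commutative monoid. -/
abbrev SharpMon (P : Type) [CommMonoid P] : Type := (unitsCon P).Quotient

/-- The monoid homomorphism `Q̄ → P̄` induced on sharpenings by `h : Q →* P`. -/
def sharpHom {Q P : Type} [CommMonoid Q] [CommMonoid P] (h : Q →* P) :
    SharpMon Q →* SharpMon P :=
  Con.lift _ ((unitsCon P).mk'.comp h) (by
    rintro a b ⟨u, rfl⟩
    show ((h a : P) : SharpMon P) = ((h (a * (u : Q)) : P) : SharpMon P)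
    refine (Con.eq _).mpr ⟨Units.map (h : Q →* P) u, ?_⟩
    simp [map_mul])

/-- The `Q`-module structure on `P` induced by a monoid homomorphism `h : Q →* P`,
with action `q • p = h q * p`. -/
def mulActionOfHom {Q P : Type} [Monoid Q] [Monoid P] (h : Q →* P) : MulAction Q P where
  smul q p := h q * p
  one_smul p := show h 1 * p = p by rw [map_one, one_mul]
  mul_smul q q' p := show h (q * q') * p = h q * (h q' * p) by rw [map_mul, mul_assoc]

/-- The setoid on a `P`-module `M` identifying elements in the same `P*`-orbit.
The quotient is the sharpened module `M̄ = M ⊗_P P̄`. -/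
def sharpSetoid (P M : Type) [CommMonoid P] [MulAction P M] : Setoid M where
  r m m' := ∃ u : Pˣ, (u : P) • m = m'
  iseqv :=
    { refl := fun m => ⟨1, by simp⟩
      symm := by
        rintro m m' ⟨u, rfl⟩
        exact ⟨u⁻¹, by rw [smul_smul, Units.inv_mul, one_smul]⟩
      trans := by
        rintro m m' m'' ⟨u, rfl⟩ ⟨v, rfl⟩
        exact ⟨v * u, by rw [Units.val_mul, mul_smul]⟩ }

/-- The sharpened module `M̄ = M ⊗_P P̄`: the quotient of `M` by the relation
`m ∼ m'` iff `u • m = m'` for some unit `u ∈ P*`. -/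
def SharpModQ (P M : Type) [CommMonoid P] [MulAction P M] : Type :=
  Quotient (sharpSetoid P M)

/-- The natural `P̄`-module structure on the sharpened module `M̄`. -/
def sharpModAction (P M : Type) [CommMonoid P] [MulAction P M] :
    MulAction (SharpMon P) (SharpModQ P M) where
  smul p m :=
    Quotient.liftOn₂ p m
      (fun (q : P) (x : M) => (Quotient.mk (sharpSetoid P M) (q • x) : SharpModQ P M))
      (by
        rintro q x q' x' ⟨u, rfl⟩ ⟨v, rfl⟩
        refine Quotient.sound ⟨u * v, ?_⟩
        rw [Units.val_mul, smul_smul, smul_smul,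
          mul_comm ((u : P) * (v : P)) q, mul_assoc])
  one_smul m := by
    refine Quotient.inductionOn m fun x => ?_
    show Quotient.mk (sharpSetoid P M) ((1 : P) • x) = Quotient.mk (sharpSetoid P M) x
    rw [one_smul]
  mul_smul p q m := by
    refine Con.induction_on₂ p q fun a b => ?_
    refine Quotient.inductionOn m fun x => ?_
    show Quotient.mk (sharpSetoid P M) ((a * b) • x)
      = Quotient.mk (sharpSetoid P M) (a • b • x)
    rw [mul_smul]

open MulAction

section Free

variable {P M : Type} [CommMonoid P] [MulAction P M]

theorem IsBasisSet.smul_eq_smul_iff {S : Set M} (hS : IsBasisSet P M S) {p q : P} {s t : M}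
    (hs : s ∈ S) (ht : t ∈ S) : p • s = q • t ↔ p = q ∧ s = t := by
  refine ⟨fun h => ?_, fun ⟨hpq, hst⟩ => hpq ▸ hst ▸ rfl⟩
  simpa using @hS.1 (p, ⟨s, hs⟩) (q, ⟨t, ht⟩) h

theorem IsBasisSet.exists_smul_eq {S : Set M} (hS : IsBasisSet P M S) (m : M) :
    ∃ p : P, ∃ s ∈ S, p • s = m := by
  obtain ⟨⟨p, s, hs⟩, h⟩ := hS.2 m
  exact ⟨p, s, hs, h⟩

theorem IsFreeMod.isTorsionFreeMod [IsLeftCancelMul P] (h : IsFreeMod P M) :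
    IsTorsionFreeMod P M := by
  obtain ⟨S, hS⟩ := h
  intro p q m hm
  obtain ⟨a, s, hs, rfl⟩ := hS.exists_smul_eq m
  rw [smul_smul, smul_smul, hS.smul_eq_smul_iff hs hs, mul_comm p, mul_comm q] at hm
  exact mul_left_cancel hm.1

theorem IsFreeMod.isComparableMod (h : IsFreeMod P M) : IsComparableMod P M := by
  obtain ⟨S, hS⟩ := h
  intro p₁ p₂ m₁ m₂ hm
  obtain ⟨a₁, s₁, hs₁, rfl⟩ := hS.exists_smul_eq m₁
  obtain ⟨a₂, s₂, hs₂, rfl⟩ := hS.exists_smul_eq m₂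
  rw [smul_smul, smul_smul, hS.smul_eq_smul_iff hs₁ hs₂] at hm
  exact ⟨s₁, a₁, a₂, rfl, hm.2 ▸ rfl⟩

theorem IsFlatMod.isTorsionFreeMod_and_isComparableMod [IsLeftCancelMul P]
    (h : IsFlatMod P M) : IsTorsionFreeMod P M ∧ IsComparableMod P M := by
  obtain ⟨ι, r, F, act, t, g, -, -, -, hdir, hone, hmul, hfree, ht_act, -, -, hg_act, hg_t,
    hg_surj, hg_inj⟩ := h
  let (i : ι) : MulAction P (F i) := { smul := act i, one_smul := hone i, mul_smul := hmul i }
  have hg_smul : ∀ i (p : P) (x : F i), g i (p • x) = p • g i x := hg_act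
  have ht_smul : ∀ i j (hij : r i j) (p : P) (x : F i), t i j hij (p • x) = p • t i j hij x :=
    ht_act
  have lift_eq : ∀ i (p₁ p₂ : P) (x₁ x₂ : F i), p₁ • g i x₁ = p₂ • g i x₂ →
      ∃ k, ∃ hik : r i k, p₁ • t i k hik x₁ = p₂ • t i k hik x₂ := by
    intro i p₁ p₂ x₁ x₂ hx
    obtain ⟨k, hik, hik', hk⟩ :=
      hg_inj i i (p₁ • x₁) (p₂ • x₂) (by rw [hg_smul, hg_smul, hx])
    rw [ht_smul, ht_smul] at hk
    exact ⟨k, hik, hk⟩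
  refine ⟨fun p q m hm => ?_, fun p₁ p₂ m₁ m₂ hm => ?_⟩
  · obtain ⟨i, x, rfl⟩ := hg_surj m
    obtain ⟨k, hik, hk⟩ := lift_eq i p q x x hm
    exact IsFreeMod.isTorsionFreeMod (hfree k) p q _ hk
  · obtain ⟨i, x₁, rfl⟩ := hg_surj m₁
    obtain ⟨j, x₂, rfl⟩ := hg_surj m₂
    obtain ⟨k, hik, hjk⟩ := hdir i j
    rw [← hg_t i k hik, ← hg_t j k hjk] at hm
    obtain ⟨l, hkl, hl⟩ := lift_eq k p₁ p₂ _ _ hm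
    obtain ⟨y, ρ₁, ρ₂, hy₁, hy₂⟩ := IsFreeMod.isComparableMod (hfree l) p₁ p₂ _ _ hl
    exact ⟨g l y, ρ₁, ρ₂, by rw [← hg_smul, hy₁, hg_t, hg_t],
      by rw [← hg_smul, hy₂, hg_t, hg_t]⟩

end Free

namespace TorsionFreeComparable

variable {P M : Type} [CommMonoid P]

variable (P) in
abbrev Free (S : Finset M) : Type := P × S

instance (S : Finset M) : MulAction P (Free P S) where
  smul p x := (p * x.1, x.2)
  one_smul x := Prod.ext (one_mul x.1) rfl
  mul_smul p q x := Prod.ext (mul_assoc p q x.1) rfl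

theorem isFreeMod_free (S : Finset M) : IsFreeMod P (Free P S) := by
  refine ⟨{x | x.1 = 1}, fun ⟨p, x, hx⟩ ⟨q, y, hy⟩ h => ?_,
    fun x => ⟨(x.1, ⟨(1, x.2), rfl⟩), Prod.ext (mul_one x.1) rfl⟩⟩
  have h' : ((p * x.1, x.2) : P × S) = (q * y.1, y.2) := h
  obtain ⟨hpq, hxy⟩ := Prod.ext_iff.mp h'
  rw [show x.1 = 1 from hx, show y.1 = 1 from hy, mul_one, mul_one] at hpq
  exact Prod.ext hpq (Subtype.ext (Prod.ext (hx.trans hy.symm) hxy))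

variable [MulAction P M]

variable (P) in
def SharesGenerator (m m' : M) : Prop := ∃ c : M, m ∈ orbit P c ∧ m' ∈ orbit P c

instance : Std.Symm (SharesGenerator P : M → M → Prop) :=
  ⟨fun _ _ ⟨c, hc, hc'⟩ => ⟨c, hc', hc⟩⟩

theorem mem_orbit_trans {a b c : M} (hab : a ∈ orbit P b) (hbc : b ∈ orbit P c) :
    a ∈ orbit P c := by
  obtain ⟨p, rfl⟩ := hab
  exact mem_orbit_of_mem_orbit p hbc

theorem SharesGenerator.trans (hC : IsComparableMod P M) {a b c : M}
    (hab : SharesGenerator P a b) (hbc : SharesGenerator P b c) : SharesGenerator P a c := by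
  obtain ⟨d, had, ⟨p, hpd⟩⟩ := hab
  obtain ⟨e, ⟨q, hqe⟩, hce⟩ := hbc
  obtain ⟨f, ρ, σ, rfl, rfl⟩ := hC p q d e (hpd.trans hqe.symm)
  exact ⟨f, mem_orbit_trans had (mem_orbit f ρ), mem_orbit_trans hce (mem_orbit f σ)⟩

variable (P) in
def DominatedBy (S T : Finset M) : Prop := ∀ s ∈ S, ∃ t ∈ T, s ∈ orbit P t

theorem DominatedBy.refl (S : Finset M) : DominatedBy P S S :=
  fun s hs => ⟨s, hs, mem_orbit_self s⟩

theorem DominatedBy.trans {S T U : Finset M} (hST : DominatedBy P S T)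
    (hTU : DominatedBy P T U) : DominatedBy P S U := by
  intro s hs
  obtain ⟨t, ht, hst⟩ := hST s hs
  obtain ⟨u, hu, htu⟩ := hTU t ht
  exact ⟨u, hu, mem_orbit_trans hst htu⟩

theorem exists_antichain_dominating_insert [DecidableEq M] (hC : IsComparableMod P M)
    {T : Finset M} (hT : IsAntichain (SharesGenerator P) (T : Set M)) (a : M) :
    ∃ T' : Finset M, IsAntichain (SharesGenerator P) (T' : Set M) ∧
      DominatedBy P T T' ∧ ∃ t' ∈ T', a ∈ orbit P t' := by
  by_cases hE : ∃ t ∈ T, SharesGenerator P a t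
  · obtain ⟨t, htT, b, hab, htb⟩ := hE
    -- `a` and `t` merge into their common generator `b`
    refine ⟨insert b (T.erase t), ?_, ?_, b, Finset.mem_insert_self b _, hab⟩
    · rw [Finset.coe_insert, Finset.coe_erase]
      refine (hT.subset Set.sdiff_subset).insert_of_symm fun y hy _ hby => ?_
      have htb' : SharesGenerator P t b := ⟨b, htb, mem_orbit_self b⟩
      exact hy.2 (hT.eq htT hy.1 (htb'.trans hC hby)).symm
    · intro s hs
      by_cases hst : s = t
      · exact ⟨b, Finset.mem_insert_self b _, hst ▸ htb⟩
      · exact ⟨s, Finset.mem_insert_of_mem (Finset.mem_erase.mpr ⟨hst, hs⟩), mem_orbit_self s⟩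
  · refine ⟨insert a T, ?_, ?_, a, Finset.mem_insert_self a _, mem_orbit_self a⟩
    · rw [Finset.coe_insert]
      exact hT.insert_of_symm fun y hy _ hay => hE ⟨y, hy, hay⟩
    · exact fun s hs => ⟨s, Finset.mem_insert_of_mem hs, mem_orbit_self s⟩

theorem exists_antichain_dominating (hC : IsComparableMod P M) (A : Finset M) :
    ∃ T : Finset M, IsAntichain (SharesGenerator P) (T : Set M) ∧ DominatedBy P A T := by
  classical
  induction A using Finset.induction_on with
  | empty => exact ⟨∅, by simp, fun s hs => absurd hs (Finset.notMem_empty s)⟩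
  | insert a A _ ih =>
    obtain ⟨T, hT, hAT⟩ := ih
    obtain ⟨T', hT', hTT', t', ht', hat'⟩ := exists_antichain_dominating_insert hC hT a
    refine ⟨T', hT', fun s hs => ?_⟩
    rcases Finset.mem_insert.mp hs with rfl | hs
    · exact ⟨t', ht', hat'⟩
    · exact hAT.trans hTT' s hs

variable (P) in
def eval (S : Finset M) (x : Free P S) : M := x.1 • (x.2 : M)

theorem eval_smul (S : Finset M) (p : P) (x : Free P S) : eval P S (p • x) = p • eval P S x :=
  mul_smul p x.1 _

theorem eval_injective (hTF : IsTorsionFreeMod P M) (hC : IsComparableMod P M) {S : Finset M}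
    (hS : IsAntichain (SharesGenerator P) (S : Set M)) : Function.Injective (eval P S) := by
  intro x y h
  obtain ⟨w, ρ, σ, hw, hw'⟩ := hC x.1 y.1 x.2 y.2 h
  have hxy : (x.2 : M) = y.2 := hS.eq x.2.2 y.2.2 ⟨w, ⟨ρ, hw⟩, ⟨σ, hw'⟩⟩
  have h' : x.1 • (x.2 : M) = y.1 • (y.2 : M) := h
  rw [← hxy] at h'
  exact Prod.ext (hTF x.1 y.1 _ h') (Subtype.ext hxy)

theorem exists_eval_eq {S T : Finset M} (h : DominatedBy P S T) (x : Free P S) :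
    ∃ y : Free P T, eval P T y = eval P S x := by
  obtain ⟨t, ht, p, hp⟩ := h x.2 x.2.2
  exact ⟨(x.1 * p, ⟨t, ht⟩), (mul_smul _ _ _).trans (congrArg (x.1 • ·) hp)⟩

variable (P) in
noncomputable def transition {S T : Finset M} (h : DominatedBy P S T) (x : Free P S) :
    Free P T :=
  (exists_eval_eq h x).choose

theorem eval_transition {S T : Finset M} (h : DominatedBy P S T) (x : Free P S) :
    eval P T (transition P h x) = eval P S x :=
  (exists_eval_eq h x).choose_spec

variable (P M) in
def Index : Type := {S : Finset M // IsAntichain (SharesGenerator P) (S : Set M)}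

theorem index_directed (hC : IsComparableMod P M) (S T : Index P M) :
    ∃ U : Index P M, DominatedBy P S.1 U.1 ∧ DominatedBy P T.1 U.1 := by
  classical
  obtain ⟨U, hU, hdom⟩ := exists_antichain_dominating hC (S.1 ∪ T.1)
  exact ⟨⟨U, hU⟩, fun s hs => hdom s (Finset.mem_union_left _ hs),
    fun s hs => hdom s (Finset.mem_union_right _ hs)⟩

theorem _root_.IsTorsionFreeMod.isFlatMod (hTF : IsTorsionFreeMod P M)
    (hC : IsComparableMod P M) : IsFlatMod P M := by
  have hinj (S : Index P M) := eval_injective hTF hC S.2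
  refine ⟨Index P M, fun S T => DominatedBy P S.1 T.1, fun S => Free P S.1, fun S p x => p • x,
    fun S T h => transition P h, fun S => eval P S.1,
    ⟨⟨∅, by simp⟩⟩, fun S => DominatedBy.refl S.1, fun S T U => DominatedBy.trans,
    index_directed hC,
    fun S => one_smul P, fun S => mul_smul, fun S => isFreeMod_free S.1,
    fun S T h p x => hinj T ?_, fun S h x => hinj S (eval_transition h x),
    fun S T U h₁ h₂ h₃ x => hinj U ?_, fun S => eval_smul S.1, fun S T h => eval_transition h,
    fun m => ⟨⟨{m}, by simp⟩, (1, ⟨m, Finset.mem_singleton_self m⟩), one_smul P m⟩,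
    fun S T x y hxy => ?_⟩
  · rw [eval_transition, eval_smul, eval_smul, eval_transition]
  · rw [eval_transition, eval_transition, eval_transition]
  · obtain ⟨U, hSU, hTU⟩ := index_directed hC S T
    exact ⟨U, hSU, hTU, hinj U (by rw [eval_transition, eval_transition]; exact hxy)⟩

end TorsionFreeComparable

theorem isFlatMod_iff {P M : Type} [CommMonoid P] [IsLeftCancelMul P] [MulAction P M] :
    IsFlatMod P M ↔ IsTorsionFreeMod P M ∧ IsComparableMod P M :=
  ⟨IsFlatMod.isTorsionFreeMod_and_isComparableMod,
    fun ⟨hTF, hC⟩ => hTF.isFlatMod hC⟩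

theorem isComparableMod_of_commGroup {G M : Type} [CommGroup G] [MulAction G M] :
    IsComparableMod G M :=
  fun _ p₂ m₁ _ h => ⟨m₁, 1, p₂⁻¹ * _, one_smul G m₁, by rw [mul_smul, h, inv_smul_smul]⟩

section Sharpening

variable {P M : Type} [CommMonoid P] [MulAction P M]

theorem IsTorsionFreeMod.units (h : IsTorsionFreeMod P M) : IsTorsionFreeMod Pˣ M :=
  fun u v m huv => Units.ext (h u v m huv)

theorem sharpMon_mk_eq_iff {a b : P} : (a : SharpMon P) = b ↔ ∃ u : Pˣ, a * u = b :=
  Con.eq _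

theorem sharpModQ_mk_eq_iff {m m' : M} :
    Quotient.mk (sharpSetoid P M) m = Quotient.mk _ m' ↔ ∃ u : Pˣ, (u : P) • m = m' :=
  Quotient.eq

instance [IsLeftCancelMul P] : IsLeftCancelMul (SharpMon P) := by
  refine ⟨?_⟩
  rintro ⟨a⟩ ⟨b⟩ ⟨c⟩ h
  obtain ⟨u, hu⟩ := sharpMon_mk_eq_iff.mp h
  rw [mul_assoc] at hu
  exact sharpMon_mk_eq_iff.mpr ⟨u, mul_left_cancel hu⟩

attribute [local instance] sharpModAction

theorem IsTorsionFreeMod.sharp (h : IsTorsionFreeMod P M) :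
    IsTorsionFreeMod (SharpMon P) (SharpModQ P M) := by
  rintro ⟨a⟩ ⟨b⟩ ⟨m⟩ hab
  obtain ⟨u, hu⟩ := sharpModQ_mk_eq_iff.mp hab
  rw [smul_smul] at hu
  exact sharpMon_mk_eq_iff.mpr ⟨u, by rw [mul_comm]; exact h _ _ m hu⟩

theorem IsComparableMod.sharp (h : IsComparableMod P M) :
    IsComparableMod (SharpMon P) (SharpModQ P M) := by
  rintro ⟨a₁⟩ ⟨a₂⟩ ⟨m₁⟩ ⟨m₂⟩ hm
  obtain ⟨u, hu⟩ := sharpModQ_mk_eq_iff.mp hm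
  rw [smul_smul] at hu
  obtain ⟨m, ρ₁, ρ₂, rfl, rfl⟩ := h _ _ _ _ hu
  exact ⟨Quotient.mk _ m, (ρ₁ : SharpMon P), ρ₂, rfl, rfl⟩

theorem IsTorsionFreeMod.of_sharp (hu : IsTorsionFreeMod Pˣ M)
    (hs : IsTorsionFreeMod (SharpMon P) (SharpModQ P M)) : IsTorsionFreeMod P M := by
  intro p q m hpq
  obtain ⟨u, rfl⟩ :=
    sharpMon_mk_eq_iff.mp (hs p q (Quotient.mk _ m) (congrArg (Quotient.mk _) hpq))
  have hu1 : u • p • m = (1 : Pˣ) • p • m := by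
    rw [Units.smul_def, smul_smul, mul_comm, ← hpq, one_smul]
  rw [hu u 1 _ hu1, Units.val_one, mul_one]

theorem IsComparableMod.of_sharp (hs : IsComparableMod (SharpMon P) (SharpModQ P M)) :
    IsComparableMod P M := by
  intro p₁ p₂ m₁ m₂ hm
  obtain ⟨⟨m⟩, ⟨ρ₁⟩, ⟨ρ₂⟩, h₁, h₂⟩ :=
    hs p₁ p₂ (Quotient.mk _ m₁) (Quotient.mk _ m₂) (congrArg (Quotient.mk _) hm)
  obtain ⟨u₁, hu₁⟩ := sharpModQ_mk_eq_iff.mp h₁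
  obtain ⟨u₂, hu₂⟩ := sharpModQ_mk_eq_iff.mp h₂
  exact ⟨m, u₁ * ρ₁, u₂ * ρ₂, by rw [mul_smul, hu₁], by rw [mul_smul, hu₂]⟩

end Sharpening

/-- Let `P` be an integral (commutative) monoid. A `P`-module `M` is flat iff
`M` is flat as a `P*`-module and the sharpened module `M̄ = M ⊗_P P̄` is a flat `P̄`-module. -/
theorem stmt8 (P : Type) [CommMonoid P] (hP : ∀ a b c : P, a * b = a * c → b = c)
    (M : Type) [MulAction P M] :
    IsFlatMod P M ↔
      IsFlatMod Pˣ M ∧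
        @IsFlatMod (SharpMon P) _ (SharpModQ P M) (sharpModAction P M) := by
  have : IsLeftCancelMul P := ⟨hP⟩
  let _ := sharpModAction P M
  rw [isFlatMod_iff, isFlatMod_iff, isFlatMod_iff]
  exact ⟨fun ⟨hTF, hC⟩ => ⟨⟨hTF.units, isComparableMod_of_commGroup⟩, hTF.sharp, hC.sharp⟩,
    fun ⟨⟨hTFu, _⟩, hTFs, hCs⟩ => ⟨hTFu.of_sharp hTFs, hCs.of_sharp⟩⟩
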